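/- arXiv:1510.00451 — 2 statements merged into one kernel-verified Lean document; each statement's English description precedes it below -/
import Mathlib

section
/- Let κ₁, κ₂ > 0 and let ψ₁, ψ₂ : ℝ → ℝ be square-integrable on [0,1] and orthogonal in L²([0,1]), i.e. ∫₀¹ ψ₁(y) ψ₂(y) dy = 0. Then the effective diffusivity of the combined shear flow equals the iterated effective diffusivity: 𝒦[ψ₁+ψ₂, diag(κ₁,κ₂)] = 𝒦[ψ₁, 𝒦[ψ₂, diag(κ₁,κ₂)]]. -/
open MeasureTheory intervalIntegral

/-- Effective diffusivity of a shear flow `v = (0, v₂(y₁))` with mean-zero stream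
function `ψ` and diagonal base diffusivity `K = diag(κ₁, κ₂)`:
`𝒦[ψ, K] = diag(K₁₁, K₂₂ + (1/K₁₁) ∫₀¹ |ψ(y)|² dy)`. -/
noncomputable def effDiff (ψ : ℝ → ℝ) (K : Matrix (Fin 2) (Fin 2) ℝ) :
    Matrix (Fin 2) (Fin 2) ℝ :=
  !![K 0 0, 0; 0, K 1 1 + (1 / K 0 0) * ∫ y in (0:ℝ)..1, (ψ y) ^ 2]

/-! The second diagonal entry of `𝒦` is additive in `∫₀¹ ψ²` while the first is left unchanged,
so for orthogonal stream functions the claim is Pythagoras' theorem in `L²([0,1])`. -/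

theorem integral_add_sq_of_integral_mul_eq_zero {α : Type*} [MeasurableSpace α] {μ : Measure α}
    {f g : α → ℝ} (hf : MemLp f 2 μ) (hg : MemLp g 2 μ) (hfg : ∫ x, f x * g x ∂μ = 0) :
    ∫ x, (f x + g x) ^ 2 ∂μ = ∫ x, f x ^ 2 ∂μ + ∫ x, g x ^ 2 ∂μ := by
  have hf2 : Integrable (fun x => f x ^ 2) μ := hf.integrable_sq
  have hg2 : Integrable (fun x => g x ^ 2) μ := hg.integrable_sq
  have hfg' : Integrable (fun x => 2 * (f x * g x)) μ := (hf.integrable_mul hg).const_mul 2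
  have hsum : Integrable (fun x => f x ^ 2 + 2 * (f x * g x)) μ := hf2.add hfg'
  calc ∫ x, (f x + g x) ^ 2 ∂μ = ∫ x, f x ^ 2 + 2 * (f x * g x) + g x ^ 2 ∂μ := by
        congr 1 with x; ring
    _ = ∫ x, f x ^ 2 ∂μ + ∫ x, g x ^ 2 ∂μ := by
        rw [integral_add hsum hg2, integral_add hf2 hfg', MeasureTheory.integral_const_mul, hfg,
          mul_zero, add_zero]

theorem intervalIntegral_add_sq_of_intervalIntegral_mul_eq_zero {a b : ℝ} (hab : a ≤ b)
    {f g : ℝ → ℝ} (hf : MemLp f 2 (volume.restrict (Set.Icc a b)))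
    (hg : MemLp g 2 (volume.restrict (Set.Icc a b))) (hfg : ∫ x in a..b, f x * g x = 0) :
    ∫ x in a..b, (f x + g x) ^ 2 = (∫ x in a..b, f x ^ 2) + ∫ x in a..b, g x ^ 2 := by
  simp only [integral_of_le hab, ← integral_Icc_eq_integral_Ioc] at hfg ⊢
  exact integral_add_sq_of_integral_mul_eq_zero hf hg hfg

theorem effDiff_eq_effDiff_effDiff {ψ φ₁ φ₂ : ℝ → ℝ} (K : Matrix (Fin 2) (Fin 2) ℝ)
    (h : ∫ y in (0:ℝ)..1, ψ y ^ 2 = (∫ y in (0:ℝ)..1, φ₁ y ^ 2) + ∫ y in (0:ℝ)..1, φ₂ y ^ 2) :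
    effDiff ψ K = effDiff φ₁ (effDiff φ₂ K) := by
  simp only [effDiff, h, Matrix.of_apply, Matrix.cons_val', Matrix.cons_val_zero,
    Matrix.cons_val_one, Matrix.empty_val', Matrix.cons_val_fin_one]
  ring_nf

theorem effDiff_add_of_orthogonal_general (κ₁ κ₂ : ℝ)
    (ψ₁ ψ₂ : ℝ → ℝ)
    (hψ₁ : MemLp ψ₁ 2 (volume.restrict (Set.Icc (0:ℝ) 1)))
    (hψ₂ : MemLp ψ₂ 2 (volume.restrict (Set.Icc (0:ℝ) 1)))
    (horth : ∫ y in (0:ℝ)..1, ψ₁ y * ψ₂ y = 0) :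
    effDiff (ψ₁ + ψ₂) !![κ₁, 0; 0, κ₂] =
      effDiff ψ₁ (effDiff ψ₂ !![κ₁, 0; 0, κ₂]) :=
  effDiff_eq_effDiff_effDiff _ <|
    intervalIntegral_add_sq_of_intervalIntegral_mul_eq_zero zero_le_one hψ₁ hψ₂ horth

/-- If `ψ₁, ψ₂` are square-integrable on `[0,1]` and orthogonal in `L²([0,1])`, then the
effective diffusivity of the combined shear flow equals the iterated effective diffusivity:
`𝒦[ψ₁+ψ₂, diag(κ₁,κ₂)] = 𝒦[ψ₁, 𝒦[ψ₂, diag(κ₁,κ₂)]]`. -/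
theorem effDiff_add_of_orthogonal (κ₁ κ₂ : ℝ) (hκ₁ : 0 < κ₁) (hκ₂ : 0 < κ₂)
    (ψ₁ ψ₂ : ℝ → ℝ)
    (hψ₁ : MemLp ψ₁ 2 (volume.restrict (Set.Icc (0:ℝ) 1)))
    (hψ₂ : MemLp ψ₂ 2 (volume.restrict (Set.Icc (0:ℝ) 1)))
    (horth : ∫ y in (0:ℝ)..1, ψ₁ y * ψ₂ y = 0) :
    effDiff (ψ₁ + ψ₂) !![κ₁, 0; 0, κ₂] =
      effDiff ψ₁ (effDiff ψ₂ !![κ₁, 0; 0, κ₂]) :=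
  effDiff_add_of_orthogonal_general κ₁ κ₂ ψ₁ ψ₂ hψ₁ hψ₂ horth
end

section
/- Let κ₁, κ₂ > 0, let n ∈ ℕ, and let ψ₁, …, ψₙ : ℝ → ℝ be square-integrable on [0,1] and pairwise orthogonal in L²([0,1]), i.e. ∫₀¹ ψᵢ(y) ψⱼ(y) dy = 0 for all i ≠ j. Then the effective diffusivity of the sum equals the n-fold iterated effective diffusivity, with the explicit value 𝒦[ψ₁ + ⋯ + ψₙ, diag(κ₁,κ₂)] = 𝒦[ψ₁, 𝒦[ψ₂, ⋯ 𝒦[ψₙ, diag(κ₁,κ₂)] ⋯]] = diag(κ₁, κ₂ + (1/κ₁) ∑ᵢ ∫₀¹ |ψᵢ(y)|² dy). -/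
/-! `effDiff ψ` keeps `diag(κ₁, c)` diagonal and only adds `(1/κ₁)‖ψ‖²` to the second
diagonal entry, so the iterated diffusivity adds `(1/κ₁)∑ᵢ‖ψᵢ‖²`. By Pythagoras in `L²([0,1])`
this sum is `‖∑ᵢ ψᵢ‖²`, the increment of the single diffusivity of the sum. -/

open MeasureTheory intervalIntegral

theorem integral_sq_finset_sum_of_orthogonal {α ι : Type*} [MeasurableSpace α] {μ : Measure α}
    (s : Finset ι) (f : ι → α → ℝ)
    (hint : ∀ i ∈ s, ∀ j ∈ s, Integrable (fun x => f i x * f j x) μ)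
    (horth : ∀ i ∈ s, ∀ j ∈ s, i ≠ j → ∫ x, f i x * f j x ∂μ = 0) :
    ∫ x, (∑ i ∈ s, f i x) ^ 2 ∂μ = ∑ i ∈ s, ∫ x, f i x ^ 2 ∂μ := by
  simp_rw [sq, Finset.sum_mul_sum]
  rw [integral_finsetSum _ fun i hi => integrable_finsetSum _ fun j hj => hint i hi j hj]
  refine Finset.sum_congr rfl fun i hi => ?_
  rw [integral_finsetSum _ fun j hj => hint i hi j hj,
    Finset.sum_eq_single_of_mem i hi fun j hj hji => horth i hi j hj hji.symm]

theorem effDiff_diagonal (κ₁ c : ℝ) (ψ : ℝ → ℝ) :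
    effDiff ψ !![κ₁, 0; 0, c] = !![κ₁, 0; 0, c + 1 / κ₁ * ∫ y in (0:ℝ)..1, ψ y ^ 2] := by
  simp [effDiff]

theorem foldr_effDiff_diagonal (κ₁ : ℝ) (l : List (ℝ → ℝ)) (c : ℝ) :
    l.foldr effDiff !![κ₁, 0; 0, c] =
      !![κ₁, 0; 0, c + 1 / κ₁ * (l.map fun ψ => ∫ y in (0:ℝ)..1, ψ y ^ 2).sum] := by
  induction l with
  | nil => simp
  | cons ψ l ih =>
    rw [List.foldr_cons, ih, effDiff_diagonal, List.map_cons, List.sum_cons]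
    ring_nf

theorem effDiff_sum_of_pairwise_orthogonal_general (κ₁ κ₂ : ℝ)
    (n : ℕ) (ψ : Fin n → ℝ → ℝ)
    (hψ : ∀ i, MemLp (ψ i) 2 (volume.restrict (Set.Icc (0:ℝ) 1)))
    (horth : ∀ i j, i ≠ j → ∫ y in (0:ℝ)..1, ψ i y * ψ j y = 0) :
    effDiff (fun y => ∑ i, ψ i y) !![κ₁, 0; 0, κ₂] =
        (List.ofFn ψ).foldr effDiff !![κ₁, 0; 0, κ₂] ∧
      (List.ofFn ψ).foldr effDiff !![κ₁, 0; 0, κ₂] =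
        !![κ₁, 0; 0, κ₂ + (1 / κ₁) * ∑ i, ∫ y in (0:ℝ)..1, (ψ i y) ^ 2] := by
  have hψIoc i : MemLp (ψ i) 2 (volume.restrict (Set.Ioc (0:ℝ) 1)) :=
    (hψ i).mono_measure (Measure.restrict_mono Set.Ioc_subset_Icc_self le_rfl)
  have hpythagoras : ∫ y in (0:ℝ)..1, (∑ i, ψ i y) ^ 2 = ∑ i, ∫ y in (0:ℝ)..1, ψ i y ^ 2 := by
    simp only [integral_of_le zero_le_one] at horth ⊢
    exact integral_sq_finset_sum_of_orthogonal _ ψ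
      (fun i _ j _ => (hψIoc i).integrable_mul (hψIoc j)) fun i _ j _ => horth i j
  have hfold : (List.ofFn ψ).foldr effDiff !![κ₁, 0; 0, κ₂] =
      !![κ₁, 0; 0, κ₂ + 1 / κ₁ * ∑ i, ∫ y in (0:ℝ)..1, ψ i y ^ 2] := by
    rw [foldr_effDiff_diagonal, List.map_ofFn, List.sum_ofFn]
    rfl
  rw [hfold, effDiff_diagonal, hpythagoras]
  exact ⟨rfl, rfl⟩

/-- For `n` stream functions `ψ₁, …, ψₙ` of same-direction shear flows, square-integrable
on `[0,1]` and pairwise orthogonal in `L²([0,1])`, the effective diffusivity of the sum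
equals the `n`-fold iterated effective diffusivity
`𝒦[ψ₁, 𝒦[ψ₂, ⋯ 𝒦[ψₙ, diag(κ₁,κ₂)] ⋯]]`, with explicit value
`diag(κ₁, κ₂ + (1/κ₁) ∑ᵢ ∫₀¹ |ψᵢ|²)`. -/
theorem effDiff_sum_of_pairwise_orthogonal (κ₁ κ₂ : ℝ) (hκ₁ : 0 < κ₁) (hκ₂ : 0 < κ₂)
    (n : ℕ) (ψ : Fin n → ℝ → ℝ)
    (hψ : ∀ i, MemLp (ψ i) 2 (volume.restrict (Set.Icc (0:ℝ) 1)))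
    (horth : ∀ i j, i ≠ j → ∫ y in (0:ℝ)..1, ψ i y * ψ j y = 0) :
    effDiff (fun y => ∑ i, ψ i y) !![κ₁, 0; 0, κ₂] =
        (List.ofFn ψ).foldr effDiff !![κ₁, 0; 0, κ₂] ∧
      (List.ofFn ψ).foldr effDiff !![κ₁, 0; 0, κ₂] =
        !![κ₁, 0; 0, κ₂ + (1 / κ₁) * ∑ i, ∫ y in (0:ℝ)..1, (ψ i y) ^ 2] :=
  effDiff_sum_of_pairwise_orthogonal_general κ₁ κ₂ n ψ hψ horth
end
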